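/- Let V, α, φ, ρ : ℝ² → ℝ be twice continuously differentiable, let D > 0, Z > 0, let ρ_s(x) = Z⁻¹ exp(−V(x)/D), and let u₁, u₂ ∈ ℝ. Define the controlled probability flux J̃ = −ρ( ∇V + u₁∇α + u₂ρ_s⁻¹∇⊥φ ) − D∇ρ. Then the flux rotation satisfies, for every x ∈ ℝ², ∇×J̃(x) = ⟨∇⊥ρ(x), ∇V(x)⟩ + u₁·⟨∇⊥ρ(x), ∇α(x)⟩ + u₂·( ⟨∇(ρ/ρ_s)(x), ∇φ(x)⟩ + (ρ/ρ_s)(x)·Δφ(x) ). -/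

import Mathlib

open Real MeasureTheory

/-- Partial derivative in the `x` direction. -/
noncomputable def pdx (f : ℝ × ℝ → ℝ) (p : ℝ × ℝ) : ℝ := fderiv ℝ f p (1, 0)

/-- Partial derivative in the `y` direction. -/
noncomputable def pdy (f : ℝ × ℝ → ℝ) (p : ℝ × ℝ) : ℝ := fderiv ℝ f p (0, 1)

/-- Gradient of a scalar field on `ℝ²`. -/
noncomputable def grad (f : ℝ × ℝ → ℝ) (p : ℝ × ℝ) : ℝ × ℝ := (pdx f p, pdy f p)

/-- Perpendicular gradient `∇⊥f = (∂_y f, -∂_x f)`. -/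
noncomputable def gradPerp (f : ℝ × ℝ → ℝ) (p : ℝ × ℝ) : ℝ × ℝ := (pdy f p, -pdx f p)

/-- Divergence of a vector field on `ℝ²`. -/
noncomputable def div2 (F : ℝ × ℝ → ℝ × ℝ) (p : ℝ × ℝ) : ℝ :=
  pdx (fun q => (F q).1) p + pdy (fun q => (F q).2) p

/-- Laplacian of a scalar field on `ℝ²`. -/
noncomputable def lap (f : ℝ × ℝ → ℝ) (p : ℝ × ℝ) : ℝ := pdx (pdx f) p + pdy (pdy f) p

/-- Scalar curl (flux rotation) of a vector field on `ℝ²`. -/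
noncomputable def curl2 (F : ℝ × ℝ → ℝ × ℝ) (p : ℝ × ℝ) : ℝ :=
  pdx (fun q => (F q).2) p - pdy (fun q => (F q).1) p

/-! The scalar curl is linear and satisfies the product rule
`∇×(f F) = f ∇×F - ⟨∇⊥f, F⟩`; it kills gradients of `C²` functions (symmetry of second
derivatives) and sends `∇⊥φ` to `-Δφ`. Since `ρ ρ_s⁻¹ ∇⊥φ = (ρ/ρ_s) ∇⊥φ`, the flux is a
combination of the four fields `ρ ∇V`, `ρ ∇α`, `(ρ/ρ_s) ∇⊥φ` and `∇ρ`, and the identity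
follows term by term. -/

section Curl

variable {F G : ℝ × ℝ → ℝ × ℝ} {f : ℝ × ℝ → ℝ} {p : ℝ × ℝ}

theorem curl2_eq_fderiv (hF : DifferentiableAt ℝ F p) :
    curl2 F p = (fderiv ℝ F p (1, 0)).2 - (fderiv ℝ F p (0, 1)).1 := by
  simp only [curl2, pdx, pdy, fderiv.fst hF, fderiv.snd hF]
  rfl

theorem curl2_sub (hF : DifferentiableAt ℝ F p) (hG : DifferentiableAt ℝ G p) :
    curl2 (fun q => F q - G q) p = curl2 F p - curl2 G p := by
  rw [curl2_eq_fderiv (hF.fun_sub hG), curl2_eq_fderiv hF, curl2_eq_fderiv hG,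
    fderiv_fun_sub hF hG]
  simp only [sub_apply, Prod.fst_sub, Prod.snd_sub]
  ring

theorem curl2_neg (hF : DifferentiableAt ℝ F p) :
    curl2 (fun q => -F q) p = -curl2 F p := by
  rw [curl2_eq_fderiv hF.fun_neg, curl2_eq_fderiv hF, fderiv_fun_neg]
  simp only [neg_apply, Prod.fst_neg, Prod.snd_neg]
  ring

theorem curl2_const_smul (hF : DifferentiableAt ℝ F p) (c : ℝ) :
    curl2 (fun q => c • F q) p = c * curl2 F p := by
  rw [curl2_eq_fderiv (hF.fun_const_smul c), curl2_eq_fderiv hF, fderiv_fun_const_smul hF]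
  simp only [smul_apply, Prod.smul_fst, Prod.smul_snd, smul_eq_mul]
  ring

theorem curl2_smul (hf : DifferentiableAt ℝ f p) (hF : DifferentiableAt ℝ F p) :
    curl2 (fun q => f q • F q) p
      = f p * curl2 F p + (pdx f p * (F p).2 - pdy f p * (F p).1) := by
  rw [curl2_eq_fderiv (hf.fun_smul hF), curl2_eq_fderiv hF, fderiv_fun_smul hf hF]
  simp only [pdx, pdy, add_apply, smul_apply, ContinuousLinearMap.smulRight_apply,
    Prod.fst_add, Prod.snd_add, Prod.smul_fst, Prod.smul_snd, smul_eq_mul]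
  ring

end Curl

theorem differentiable_fderiv_apply {E F : Type*} [NormedAddCommGroup E] [NormedSpace ℝ E]
    [NormedAddCommGroup F] [NormedSpace ℝ F] {f : E → F} (hf : ContDiff ℝ 2 f) (v : E) :
    Differentiable ℝ (fun q => fderiv ℝ f q v) :=
  ((hf.fderiv_right (m := 1) (by norm_num)).clm_apply contDiff_const).differentiable one_ne_zero

section SecondOrder

variable {f : ℝ × ℝ → ℝ}

theorem differentiable_grad (hf : ContDiff ℝ 2 f) : Differentiable ℝ (grad f) :=
  (differentiable_fderiv_apply hf _).prodMk (differentiable_fderiv_apply hf _)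

theorem differentiable_gradPerp (hf : ContDiff ℝ 2 f) : Differentiable ℝ (gradPerp f) :=
  (differentiable_fderiv_apply hf _).prodMk (differentiable_fderiv_apply hf _).neg

theorem pdx_pdy_comm (hf : ContDiff ℝ 2 f) (p : ℝ × ℝ) : pdx (pdy f) p = pdy (pdx f) p := by
  have hd : DifferentiableAt ℝ (fderiv ℝ f) p :=
    (hf.fderiv_right (m := 1) (by norm_num)).differentiable one_ne_zero p
  have hsymm : IsSymmSndFDerivAt ℝ f p := hf.contDiffAt.isSymmSndFDerivAt (by norm_num)
  unfold pdx pdy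
  rw [fderiv_clm_apply hd (differentiableAt_const _),
    fderiv_clm_apply hd (differentiableAt_const _)]
  simp [hsymm (1, 0) (0, 1)]

theorem curl2_grad (hf : ContDiff ℝ 2 f) (p : ℝ × ℝ) : curl2 (grad f) p = 0 :=
  sub_eq_zero.mpr (pdx_pdy_comm hf p)

theorem curl2_gradPerp (p : ℝ × ℝ) : curl2 (gradPerp f) p = -lap f p := by
  unfold curl2 gradPerp lap pdx pdy
  simp only [fderiv_fun_neg, neg_apply]
  ring

end SecondOrder

theorem curl_of_controlled_flux_general
    (V α φ ρ : ℝ × ℝ → ℝ)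
    (hV : ContDiff ℝ 2 V) (hα : ContDiff ℝ 2 α) (hφ : ContDiff ℝ 2 φ)
    (hρ : ContDiff ℝ 2 ρ)
    (D Z : ℝ) (hZ : 0 < Z)
    (ρs : ℝ × ℝ → ℝ) (hρs : ∀ x, ρs x = Z⁻¹ * Real.exp (-V x / D))
    (u₁ u₂ : ℝ) :
    ∀ p : ℝ × ℝ,
      curl2 (fun q =>
          -(ρ q • (grad V q + u₁ • grad α q + u₂ • ((ρs q)⁻¹ • gradPerp φ q)))
            - D • grad ρ q) p
        = (pdy ρ p * pdx V p + (-pdx ρ p) * pdy V p)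
          + u₁ * (pdy ρ p * pdx α p + (-pdx ρ p) * pdy α p)
          + u₂ * ((pdx (fun q => ρ q / ρs q) p * pdx φ p
                    + pdy (fun q => ρ q / ρs q) p * pdy φ p)
                  + (ρ p / ρs p) * lap φ p) := by
  intro p
  have hρs_ne : ∀ q, ρs q ≠ 0 := fun q => by rw [hρs]; positivity
  have hρs_diff : Differentiable ℝ ρs := by
    have := hV.differentiable two_ne_zero
    rw [funext hρs]
    fun_prop
  have hρ_diff := hρ.differentiable two_ne_zero
  have hg_diff : Differentiable ℝ (fun q => ρ q / ρs q) := by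
    simp only [div_eq_mul_inv]
    fun_prop (disch := exact hρs_ne _)
  have hgradV := differentiable_grad hV
  have hgradα := differentiable_grad hα
  have hgradρ := differentiable_grad hρ
  have hgradPerpφ := differentiable_gradPerp hφ
  have hflux : (fun q =>
      -(ρ q • (grad V q + u₁ • grad α q + u₂ • ((ρs q)⁻¹ • gradPerp φ q))) - D • grad ρ q)
      = fun q => -(ρ q • grad V q) - u₁ • (ρ q • grad α q)
          - u₂ • ((ρ q / ρs q) • gradPerp φ q) - D • grad ρ q := by
    funext q
    rw [div_eq_mul_inv]
    module
  rw [hflux, curl2_sub, curl2_sub, curl2_sub, curl2_neg, curl2_const_smul, curl2_const_smul,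
    curl2_const_smul, curl2_smul, curl2_smul, curl2_smul (hg_diff p) (hgradPerpφ p),
    curl2_grad hV, curl2_grad hα, curl2_grad hρ, curl2_gradPerp]
  · simp only [grad, gradPerp, lap]
    ring
  all_goals fun_prop

/-- Flux rotation of the controlled probability flux
`J̃ = -ρ(∇V + u₁∇α + u₂ρ_s⁻¹∇⊥φ) - D∇ρ`:
`∇×J̃ = ⟨∇⊥ρ, ∇V⟩ + u₁⟨∇⊥ρ, ∇α⟩ + u₂(⟨∇(ρ/ρ_s), ∇φ⟩ + (ρ/ρ_s)Δφ)`. -/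
theorem curl_of_controlled_flux
    (V α φ ρ : ℝ × ℝ → ℝ)
    (hV : ContDiff ℝ 2 V) (hα : ContDiff ℝ 2 α) (hφ : ContDiff ℝ 2 φ)
    (hρ : ContDiff ℝ 2 ρ)
    (D Z : ℝ) (hD : 0 < D) (hZ : 0 < Z)
    (ρs : ℝ × ℝ → ℝ) (hρs : ∀ x, ρs x = Z⁻¹ * Real.exp (-V x / D))
    (u₁ u₂ : ℝ) :
    ∀ p : ℝ × ℝ,
      curl2 (fun q =>
          -(ρ q • (grad V q + u₁ • grad α q + u₂ • ((ρs q)⁻¹ • gradPerp φ q)))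
            - D • grad ρ q) p
        = (pdy ρ p * pdx V p + (-pdx ρ p) * pdy V p)
          + u₁ * (pdy ρ p * pdx α p + (-pdx ρ p) * pdy α p)
          + u₂ * ((pdx (fun q => ρ q / ρs q) p * pdx φ p
                    + pdy (fun q => ρ q / ρs q) p * pdy φ p)
                  + (ρ p / ρs p) * lap φ p) :=
  curl_of_controlled_flux_general V α φ ρ hV hα hφ hρ D Z hZ ρs hρs u₁ u₂
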